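/- The least generalization (FIND-S update) of a rule r and a positive instance p, defined componentwise by keeping r_i if r_i = p_i and setting '?' otherwise, covers both p and every instance covered by r, and is the most specific such rule: any rule covering p and all instances covered by r is a componentwise generalization of it. -/

import Mathlib

def Covers {m : ℕ} {A : Fin m → Type*} (r : ∀ i, Option (A i)) (x : ∀ i, A i) : Prop :=
  ∀ i, r i = none ∨ r i = some (x i)

/-- The FIND-S least generalization of rule `r` and positive instance `p`:
keep `r i` if it equals `some (p i)`, otherwise set it to `?`. -/
def lgen {m : ℕ} {A : Fin m → Type*} [∀ i, DecidableEq (A i)]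
    (r : ∀ i, Option (A i)) (p : ∀ i, A i) : ∀ i, Option (A i) :=
  fun i => if r i = some (p i) then r i else none

/-! Let `s` cover `p` and everything `r` covers, and work coordinatewise. Where `lgen r p`
keeps an entry, that entry is `p i`, which `s` accepts since it covers `p`. Where it drops an
entry, either `r i = ?`, and `s` must accept every value at `i` since `r` covers instances with
an arbitrary `i`-th coordinate; or `r i = some a` with `a ≠ p i`, and `s` covers two instances
differing at `i` (`p`, and `p` overwritten by the fixed entries of `r`), which forces
`s i = ?`. -/

namespace Covers

variable {m : ℕ} {A : Fin m → Type*} {r s : ∀ i, Option (A i)} {x y : ∀ i, A i}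

theorem getD (r : ∀ i, Option (A i)) (p : ∀ i, A i) : Covers r fun i => (r i).getD (p i) := by
  intro i
  cases h : r i <;> simp [h]

theorem update (hx : Covers r x) {i : Fin m} (hi : r i = none) (a : A i) :
    Covers r (Function.update x i a) := by
  intro j
  rcases eq_or_ne j i with rfl | hji
  · exact .inl hi
  · simpa [Function.update_of_ne hji] using hx j

theorem eq_none_of_ne (hx : Covers s x) (hy : Covers s y) {i : Fin m} (hxy : x i ≠ y i) :
    s i = none := by
  rcases hx i with hs | hs
  · exact hs
  · rcases hy i with hs' | hs'
    · exact hs'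
    · exact absurd (Option.some_injective _ (hs.symm.trans hs')) hxy

end Covers

section lgen

variable {m : ℕ} {A : Fin m → Type*} [∀ i, DecidableEq (A i)] {r s : ∀ i, Option (A i)}
  {p x : ∀ i, A i}

theorem covers_lgen_self (r : ∀ i, Option (A i)) (p : ∀ i, A i) : Covers (lgen r p) p := by
  intro i
  by_cases h : r i = some (p i) <;> simp [lgen, h]

theorem covers_lgen_of_covers (hx : Covers r x) : Covers (lgen r p) x := by
  intro i
  by_cases h : r i = some (p i)
  · simpa [lgen, h] using hx i
  · simp [lgen, h]

theorem covers_of_covers_lgen (hsp : Covers s p) (hsr : ∀ y, Covers r y → Covers s y)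
    (hx : Covers (lgen r p) x) : Covers s x := by
  intro i
  by_cases hrp : r i = some (p i)
  · have hxp : x i = p i := by simpa [lgen, hrp, eq_comm] using hx i
    simpa [hxp] using hsp i
  rcases Option.eq_none_or_eq_some (r i) with hr | ⟨a, hr⟩
  · simpa using hsr _ ((Covers.getD r p).update hr (x i)) i
  · have hap : (fun j => (r j).getD (p j)) i ≠ p i := by
      simpa [hr] using hrp
    exact .inl ((hsr _ (Covers.getD r p)).eq_none_of_ne hsp hap)

end lgen

theorem least_generalization_spec_general (m : ℕ) (A : Fin m → Type*)
    [∀ i, DecidableEq (A i)] (r : ∀ i, Option (A i)) (p : ∀ i, A i) :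
    Covers (lgen r p) p ∧
    (∀ x, Covers r x → Covers (lgen r p) x) ∧
    (∀ s : ∀ i, Option (A i), Covers s p → (∀ x, Covers r x → Covers s x) →
      ∀ x, Covers (lgen r p) x → Covers s x) :=
  ⟨covers_lgen_self r p, fun _ => covers_lgen_of_covers,
    fun _ hsp hsr _ => covers_of_covers_lgen hsp hsr⟩

/-- The least generalization `g(r,p)` covers `p` and every instance covered by `r`,
and it is the most specific such rule: assuming `r` covers some instance, any rule
`s` covering `p` and all instances covered by `r` covers every instance covered by
`g(r,p)`. -/
theorem least_generalization_spec (m : ℕ) (A : Fin m → Type*)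
    [∀ i, DecidableEq (A i)] (r : ∀ i, Option (A i)) (p : ∀ i, A i)
    (hne : ∃ x, Covers r x) :
    Covers (lgen r p) p ∧
    (∀ x, Covers r x → Covers (lgen r p) x) ∧
    (∀ s : ∀ i, Option (A i), Covers s p → (∀ x, Covers r x → Covers s x) →
      ∀ x, Covers (lgen r p) x → Covers s x) :=
  least_generalization_spec_general m A r p
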